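/- arXiv:2603.07893 — 2 statements merged into one kernel-verified Lean document; each statement's English description precedes it below -/
import Mathlib

section
/- Suppose a well-calibrated forecast scheme on finite Ω contains information new to the farmer, i.e., there exist a forecast ξ₀ with positive probability and a state t₀ with ξ₀(t₀) ≠ p(t₀), where p is the farmer's prior. Then there exists a payoff function g : Θ × Ω → ℝ (with Θ containing at least two actions) such that the farmer's expected payoff from best-responding to the forecasts is strictly greater than from best-responding to p. -/
open Finset

/-- If a well-calibrated forecast scheme contains information new to
the farmer (a positive-probability forecast disagreeing with the prior at some
state), then there exists a payoff function for which best-responding to the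
forecasts is strictly better in expectation than best-responding to the prior. -/
theorem stmt3
    {I Ω Θ : Type*} [Fintype I] [Fintype Ω] [Fintype Θ] [Nonempty Θ]
    [DecidableEq Ω]
    (J : I → Ω → ℝ) (ξ : I → Ω → ℝ)
    (hJ : ∀ i t, 0 ≤ J i t)
    (htotal : ∑ i, ∑ t, J i t = 1)
    (hcal : ∀ i t, J i t = (∑ t', J i t') * ξ i t)
    (p : Ω → ℝ) (hp : ∀ t, p t = ∑ i, J i t)
    (θ₁ θ₂ : Θ) (hθ : θ₁ ≠ θ₂)
    (i₀ : I) (t₀ : Ω)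
    (hmass : 0 < ∑ t, J i₀ t)
    (hnew : ξ i₀ t₀ ≠ p t₀) :
    ∃ g : Θ → Ω → ℝ,
      ∀ a : I → Θ,
        (∀ i θ, ∑ t, ξ i t * g θ t ≤ ∑ t, ξ i t * g (a i) t) →
        ∀ θ₀ : Θ,
          (∀ θ, ∑ t, p t * g θ t ≤ ∑ t, p t * g θ₀ t) →
          ∑ t, p t * g θ₀ t < ∑ i, ∑ t, J i t * g (a i) t := by
  classical
  set s : ℝ := if p t₀ < ξ i₀ t₀ then 1 else -1 with hs
  set g : Θ → Ω → ℝ :=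
    fun θ t => if θ = θ₁ then s * ((if t = t₀ then 1 else 0) - p t₀) else 0 with hg
  refine ⟨g, ?_⟩
  intro a ha θ₀ hθ₀
  -- key sum identity for g θ₁
  have key : ∀ q : Ω → ℝ,
      ∑ t, q t * g θ₁ t = s * (q t₀ - p t₀ * ∑ t, q t) := by
    intro q
    simp only [hg, if_pos rfl]
    have hterm : ∀ t : Ω, q t * (s * ((if t = t₀ then (1:ℝ) else 0) - p t₀))
        = s * (if t = t₀ then q t else 0) - s * (q t * p t₀) := by
      intro t; by_cases h : t = t₀ <;> simp [h] <;> ring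
    rw [Finset.sum_congr rfl (fun t _ => hterm t), Finset.sum_sub_distrib,
        ← Finset.mul_sum, ← Finset.mul_sum,
        Finset.sum_ite_eq' Finset.univ t₀ q, if_pos (Finset.mem_univ t₀),
        ← Finset.sum_mul]
    ring
  have keyz : ∀ θ, θ ≠ θ₁ → ∀ q : Ω → ℝ, ∑ t, q t * g θ t = 0 := by
    intro θ hθ' q
    simp [hg, if_neg hθ']
  -- prior sums to 1
  have hpsum : ∑ t, p t = 1 := by
    simp only [hp]; rw [Finset.sum_comm]; exact htotal
  -- prior payoff of every action is 0
  have hprior : ∀ θ, ∑ t, p t * g θ t = 0 := by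
    intro θ
    by_cases hθ' : θ = θ₁
    · subst hθ'; rw [key, hpsum]; ring
    · exact keyz θ hθ' p
  rw [hprior θ₀]
  -- masses
  set M : I → ℝ := fun i => ∑ t, J i t with hM
  have hMnonneg : ∀ i, 0 ≤ M i := fun i => Finset.sum_nonneg fun t _ => hJ i t
  have hfactor : ∀ i θ, ∑ t, J i t * g θ t = M i * ∑ t, ξ i t * g θ t := by
    intro i θ
    rw [Finset.mul_sum]
    apply Finset.sum_congr rfl
    intro t _
    rw [hcal i t]; ring
  -- each term nonnegative
  have hnn : ∀ i, 0 ≤ ∑ t, J i t * g (a i) t := by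
    intro i
    rw [hfactor]
    apply mul_nonneg (hMnonneg i)
    calc (0:ℝ) = ∑ t, ξ i t * g θ₂ t := by rw [keyz θ₂ (Ne.symm hθ) (ξ i)]
    _ ≤ ∑ t, ξ i t * g (a i) t := ha i θ₂
  -- ξ i₀ sums to 1
  have hξsum : ∑ t, ξ i₀ t = 1 := by
    have h1 : M i₀ = M i₀ * ∑ t, ξ i₀ t := by
      rw [hM, Finset.mul_sum]
      apply Finset.sum_congr rfl
      intro t _; exact hcal i₀ t
    have hMne : M i₀ ≠ 0 := ne_of_gt hmass
    have h2 : M i₀ * 1 = M i₀ * ∑ t, ξ i₀ t := by rw [mul_one]; exact h1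
    exact (mul_left_cancel₀ hMne h2).symm
  -- positivity at i₀
  have hpos : 0 < ∑ t, J i₀ t * g (a i₀) t := by
    rw [hfactor]
    apply mul_pos hmass
    have h1 : s * (ξ i₀ t₀ - p t₀) ≤ ∑ t, ξ i₀ t * g (a i₀) t := by
      calc s * (ξ i₀ t₀ - p t₀) = s * (ξ i₀ t₀ - p t₀ * ∑ t, ξ i₀ t) := by
            rw [hξsum]; ring
      _ = ∑ t, ξ i₀ t * g θ₁ t := (key (ξ i₀)).symm
      _ ≤ _ := ha i₀ θ₁
    refine lt_of_lt_of_le ?_ h1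
    rcases lt_or_gt_of_ne hnew with h | h
    · have : s = -1 := by rw [hs, if_neg (not_lt.mpr h.le)]
      rw [this]; nlinarith
    · have : s = 1 := by rw [hs, if_pos h]
      rw [this]; nlinarith
  exact Finset.sum_pos' (fun i _ => hnn i) ⟨i₀, Finset.mem_univ i₀, hpos⟩
end

section
/- (Brier score decomposition) For a forecast Ξ taking finitely many values ξ over outcome bins j with indicators Y_j, the expected Brier score decomposes as E[Σ_j (Y_j − ξ_j)²] = E[Σ_j (ξ_j − q_j(Ξ))²] + E[Σ_j q_j(Ξ)(1 − q_j(Ξ))], where q_j(ξ) = P(ω = j | Ξ = ξ). (Reliability plus refinement decomposition.) -/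
open Finset

/-- Reliability–refinement decomposition of the expected Brier
score: E[Σ_j (Y_j − ξ_j)²] = E[Σ_j (ξ_j − q_j(Ξ))²] + E[Σ_j q_j(Ξ)(1 − q_j(Ξ))],
where q_j(ξ) = P(ω = j | Ξ = ξ). -/
theorem stmt6
    {I : Type*} [Fintype I] (m : ℕ)
    (J : I → Fin m → ℝ) (ξ : I → Fin m → ℝ)
    (hJ : ∀ i j, 0 ≤ J i j)
    (htot : ∑ i, ∑ j, J i j = 1)
    (hsupp : ∀ i, 0 < ∑ j, J i j) :
    let q : I → Fin m → ℝ := fun i j => J i j / ∑ j', J i j';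
    ∑ i, ∑ ω, J i ω * ∑ j, ((if ω = j then (1 : ℝ) else 0) - ξ i j) ^ 2 =
      (∑ i, ∑ ω, J i ω * ∑ j, (ξ i j - q i j) ^ 2) +
      (∑ i, ∑ ω, J i ω * ∑ j, q i j * (1 - q i j)) := by
  intro q
  rw [← Finset.sum_add_distrib]
  refine Finset.sum_congr rfl fun i _ => ?_
  set S : ℝ := ∑ j', J i j' with hS
  have hS0 : S ≠ 0 := ne_of_gt (hsupp i)
  -- RHS: inner sums don't depend on ω
  rw [← Finset.sum_mul, ← Finset.sum_mul, ← hS, ← mul_add]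
  -- LHS: swap order of summation
  have hL : ∑ ω, J i ω * ∑ j, ((if ω = j then (1 : ℝ) else 0) - ξ i j) ^ 2 =
      ∑ j, ∑ ω, J i ω * ((if ω = j then (1 : ℝ) else 0) - ξ i j) ^ 2 := by
    rw [Finset.sum_comm]
    exact Finset.sum_congr rfl fun ω _ => Finset.mul_sum _ _ _
  rw [hL, mul_add, mul_sum, mul_sum, ← Finset.sum_add_distrib]
  refine Finset.sum_congr rfl fun j _ => ?_
  have h1 : ∀ ω, J i ω * ((if ω = j then (1 : ℝ) else 0) - ξ i j) ^ 2 =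
      (if ω = j then J i ω * (1 - 2 * ξ i j) else 0) + J i ω * (ξ i j) ^ 2 := by
    intro ω; split <;> ring
  rw [Finset.sum_congr rfl fun ω _ => h1 ω, Finset.sum_add_distrib,
    Finset.sum_ite_eq' Finset.univ j (fun ω => J i ω * (1 - 2 * ξ i j)),
    if_pos (Finset.mem_univ j), ← Finset.sum_mul, ← hS]
  show J i j * (1 - 2 * ξ i j) + S * ξ i j ^ 2 =
      S * (ξ i j - J i j / S) ^ 2 + S * (J i j / S * (1 - J i j / S))
  field_simp
  ring
end
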